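/- The subgroup G₁₀₈ of GL₃(ℂ) generated by the matrices S, T and V consists of matrices of determinant 1 (i.e., G₁₀₈ ⊆ SL₃(ℂ)) and is a finite group of order 108. -/
import Mathlib

open Matrix
open scoped MatrixGroups

/-- `ζ₉ = exp(2πi/9)`. -/
noncomputable def ζ₉ : ℂ := Complex.exp (2 * (Real.pi : ℂ) * Complex.I / 9)

/-- `ω = ζ₉⁶`, a primitive cube root of unity. -/
noncomputable def ω : ℂ := ζ₉ ^ 6

/-- `ε = ζ₉⁴`. -/
noncomputable def ε : ℂ := ζ₉ ^ 4

/-- `S = diag(1, ω, ω²)`. -/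
noncomputable def Smat : Matrix (Fin 3) (Fin 3) ℂ := !![1, 0, 0; 0, ω, 0; 0, 0, ω ^ 2]

/-- `T`, the cyclic permutation matrix with rows `(0,1,0), (0,0,1), (1,0,0)`. -/
noncomputable def Tmat : Matrix (Fin 3) (Fin 3) ℂ := !![0, 1, 0; 0, 0, 1; 1, 0, 0]

/-- `U = diag(ε, ε, εω)`. -/
noncomputable def Umat : Matrix (Fin 3) (Fin 3) ℂ := !![ε, 0, 0; 0, ε, 0; 0, 0, ε * ω]

/-- `V = (ω − ω²)⁻¹·[[1,1,1],[1,ω,ω²],[1,ω²,ω]]`. -/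
noncomputable def Vmat : Matrix (Fin 3) (Fin 3) ℂ :=
  (ω - ω ^ 2)⁻¹ • !![1, 1, 1; 1, ω, ω ^ 2; 1, ω ^ 2, ω]

/-- `G₁₀₈`, the subgroup of `GL₃(ℂ)` generated by `S`, `T` and `V`. -/
noncomputable def G108 : Subgroup (GL (Fin 3) ℂ) :=
  Subgroup.closure {g : GL (Fin 3) ℂ |
    (g : Matrix (Fin 3) (Fin 3) ℂ) = Smat ∨ (g : Matrix (Fin 3) (Fin 3) ℂ) = Tmat ∨
      (g : Matrix (Fin 3) (Fin 3) ℂ) = Vmat}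

/-- `G₂₁₆`, the subgroup of `GL₃(ℂ)` generated by `S`, `T`, `V` and `UVU⁻¹`. -/
noncomputable def G216 : Subgroup (GL (Fin 3) ℂ) :=
  Subgroup.closure {g : GL (Fin 3) ℂ |
    (g : Matrix (Fin 3) (Fin 3) ℂ) = Smat ∨ (g : Matrix (Fin 3) (Fin 3) ℂ) = Tmat ∨
      (g : Matrix (Fin 3) (Fin 3) ℂ) = Vmat ∨
      (g : Matrix (Fin 3) (Fin 3) ℂ) = Umat * Vmat * Umat⁻¹}

/-- `G₆₄₈`, the subgroup of `GL₃(ℂ)` generated by `S`, `T`, `V` and `U`. -/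
noncomputable def G648 : Subgroup (GL (Fin 3) ℂ) :=
  Subgroup.closure {g : GL (Fin 3) ℂ |
    (g : Matrix (Fin 3) (Fin 3) ℂ) = Smat ∨ (g : Matrix (Fin 3) (Fin 3) ℂ) = Tmat ∨
      (g : Matrix (Fin 3) (Fin 3) ℂ) = Vmat ∨ (g : Matrix (Fin 3) (Fin 3) ℂ) = Umat}

/-- `D₁`, the subgroup of `GL₃(ℂ)` generated by `S` and `T`. -/
noncomputable def D1 : Subgroup (GL (Fin 3) ℂ) :=
  Subgroup.closure {g : GL (Fin 3) ℂ |
    (g : Matrix (Fin 3) (Fin 3) ℂ) = Smat ∨ (g : Matrix (Fin 3) (Fin 3) ℂ) = Tmat}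

/-! ### The ring `ℤ[√-3]` -/

structure E3 where
  a : ℤ
  b : ℤ
deriving DecidableEq

def e2 (a b : ℤ) : E3 := ⟨a, b⟩

@[simp] theorem e2_a (a b : ℤ) : (e2 a b).a = a := rfl
@[simp] theorem e2_b (a b : ℤ) : (e2 a b).b = b := rfl

namespace E3

theorem ext' : ∀ {x y : E3}, x.a = y.a → x.b = y.b → x = y
  | ⟨_, _⟩, ⟨_, _⟩, rfl, rfl => rfl

instance : Zero E3 := ⟨⟨0, 0⟩⟩
instance : One E3 := ⟨⟨1, 0⟩⟩
instance : Add E3 := ⟨fun x y => ⟨x.a + y.a, x.b + y.b⟩⟩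
instance : Neg E3 := ⟨fun x => ⟨-x.a, -x.b⟩⟩
instance : Mul E3 := ⟨fun x y => ⟨x.a * y.a - 3 * x.b * y.b, x.a * y.b + x.b * y.a⟩⟩

@[simp] theorem zero_a : (0 : E3).a = 0 := rfl
@[simp] theorem zero_b : (0 : E3).b = 0 := rfl
@[simp] theorem one_a : (1 : E3).a = 1 := rfl
@[simp] theorem one_b : (1 : E3).b = 0 := rfl
@[simp] theorem add_a (x y : E3) : (x + y).a = x.a + y.a := rfl
@[simp] theorem add_b (x y : E3) : (x + y).b = x.b + y.b := rfl
@[simp] theorem neg_a (x : E3) : (-x).a = -x.a := rfl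
@[simp] theorem neg_b (x : E3) : (-x).b = -x.b := rfl
@[simp] theorem mul_a (x y : E3) : (x * y).a = x.a * y.a - 3 * x.b * y.b := rfl
@[simp] theorem mul_b (x y : E3) : (x * y).b = x.a * y.b + x.b * y.a := rfl

instance commRing : CommRing E3 where
  add := (· + ·)
  zero := 0
  neg := Neg.neg
  mul := (· * ·)
  one := 1
  nsmul := nsmulRec
  zsmul := zsmulRec
  add_assoc := by intros; apply ext' <;> simp <;> ring
  zero_add := by intros; apply ext' <;> simp
  add_zero := by intros; apply ext' <;> simp
  add_comm := by intros; apply ext' <;> simp <;> ring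
  neg_add_cancel := by intros; apply ext' <;> simp
  left_distrib := by intros; apply ext' <;> simp <;> ring
  right_distrib := by intros; apply ext' <;> simp <;> ring
  zero_mul := by intros; apply ext' <;> simp
  mul_zero := by intros; apply ext' <;> simp
  mul_assoc := by intros; apply ext' <;> simp <;> ring
  one_mul := by intros; apply ext' <;> simp
  mul_one := by intros; apply ext' <;> simp
  mul_comm := by intros; apply ext' <;> simp <;> ring

end E3

/-! ### Facts about `ω` -/

theorem zeta9_pow_nine : ζ₉ ^ 9 = 1 := by
  rw [ζ₉, ← Complex.exp_nat_mul]
  rw [show (9 : ℕ) * (2 * (Real.pi : ℂ) * Complex.I / 9) = 2 * Real.pi * Complex.I by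
    push_cast; ring]
  exact Complex.exp_two_pi_mul_I

theorem omega_pow_three : ω ^ 3 = 1 := by
  rw [ω, ← pow_mul]
  rw [show 6 * 3 = 9 * 2 by norm_num, pow_mul, zeta9_pow_nine, one_pow]

theorem omega_ne_one : ω ≠ 1 := by
  rw [ω, ζ₉, ← Complex.exp_nat_mul]
  intro h
  rw [Complex.exp_eq_one_iff] at h
  obtain ⟨n, hn⟩ := h
  have hπ : (Real.pi : ℂ) ≠ 0 := by simpa using Real.pi_ne_zero
  have hI : Complex.I ≠ 0 := Complex.I_ne_zero
  have h2 : ((3 * n : ℤ) : ℂ) * ((Real.pi : ℂ) * Complex.I) =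
      ((2 : ℤ) : ℂ) * ((Real.pi : ℂ) * Complex.I) := by
    push_cast at hn ⊢
    linear_combination (-3/2 : ℂ) * hn
  have h3 : ((3 * n : ℤ) : ℂ) = ((2 : ℤ) : ℂ) :=
    mul_right_cancel₀ (mul_ne_zero hπ hI) h2
  have h4 : (3 * n : ℤ) = 2 := by exact_mod_cast h3
  omega

theorem omega_sum : ω ^ 2 + ω + 1 = 0 := by
  have h := omega_pow_three
  have h2 : (ω - 1) * (ω ^ 2 + ω + 1) = 0 := by linear_combination h
  rcases mul_eq_zero.mp h2 with h' | h'
  · exact absurd (sub_eq_zero.mp h') omega_ne_one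
  · exact h'

noncomputable def sq3 : ℂ := ω - ω ^ 2

theorem sq3_sq : sq3 ^ 2 = -3 := by
  rw [sq3]
  linear_combination (ω - 2) * omega_pow_three + omega_sum

theorem sq3_ne : sq3 ≠ 0 := by
  intro h
  have := sq3_sq
  rw [h] at this
  norm_num at this

theorem omega_eq : ω = (-1 + sq3) / 2 := by
  rw [sq3]; linear_combination omega_sum / 2

theorem omega_sq_eq : ω ^ 2 = (-1 - sq3) / 2 := by
  rw [sq3]; linear_combination omega_sum / 2

theorem sq3_inv : sq3⁻¹ = -sq3 / 3 := by
  have h : sq3 * (-sq3 / 3) = 1 := by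
    field_simp
    linear_combination -sq3_sq
  exact inv_eq_of_mul_eq_one_right h

/-! ### The ring hom `E3 → ℂ` -/

noncomputable def phi : E3 →+* ℂ where
  toFun x := (x.a : ℂ) + (x.b : ℂ) * sq3
  map_one' := by simp
  map_mul' x y := by
    simp only [E3.mul_a, E3.mul_b]
    push_cast
    linear_combination (-(x.b : ℂ) * (y.b : ℂ)) * sq3_sq
  map_zero' := by simp
  map_add' x y := by
    simp only [E3.add_a, E3.add_b]
    push_cast
    ring

theorem phi_apply (x : E3) : phi x = (x.a : ℂ) + (x.b : ℂ) * sq3 := rfl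

theorem phi_inj : Function.Injective phi := by
  intro x y h
  rw [phi_apply, phi_apply] at h
  by_cases hb : x.b = y.b
  · apply E3.ext' _ hb
    rw [hb] at h
    have : ((x.a : ℂ)) = (y.a : ℂ) := by linear_combination h
    exact_mod_cast this
  · exfalso
    have hs : sq3 * ((x.b - y.b : ℤ) : ℂ) = ((y.a - x.a : ℤ) : ℂ) := by
      push_cast
      linear_combination h
    have h2 : ((y.a - x.a : ℤ) : ℂ) ^ 2 = -3 * ((x.b - y.b : ℤ) : ℂ) ^ 2 := by
      rw [← hs, mul_pow, sq3_sq]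
    have h3 : (y.a - x.a) ^ 2 = -3 * (x.b - y.b) ^ 2 := by exact_mod_cast h2
    have h4 : (x.b - y.b) ≠ 0 := sub_ne_zero.mpr hb
    nlinarith [sq_nonneg (y.a - x.a), sq_pos_of_ne_zero h4]

noncomputable def Φ : Matrix (Fin 3) (Fin 3) E3 →+* Matrix (Fin 3) (Fin 3) ℂ :=
  phi.mapMatrix

theorem Φ_apply (A : Matrix (Fin 3) (Fin 3) E3) (i j : Fin 3) : Φ A i j = phi (A i j) := rfl

theorem Φ_inj : Function.Injective Φ := by
  intro A B h
  ext i j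
  apply phi_inj
  have : Φ A i j = Φ B i j := by rw [h]
  rwa [Φ_apply, Φ_apply] at this

def Ldata : List (Matrix (Fin 3) (Fin 3) E3) := [
!![e2 6 0, e2 0 0, e2 0 0; e2 0 0, e2 6 0, e2 0 0; e2 0 0, e2 0 0, e2 6 0],
!![e2 6 0, e2 0 0, e2 0 0; e2 0 0, e2 (-3) 3, e2 0 0; e2 0 0, e2 0 0, e2 (-3) (-3)],
!![e2 0 0, e2 6 0, e2 0 0; e2 0 0, e2 0 0, e2 6 0; e2 6 0, e2 0 0, e2 0 0],
!![e2 0 (-2), e2 0 (-2), e2 0 (-2); e2 0 (-2), e2 3 1, e2 (-3) 1; e2 0 (-2), e2 (-3) 1, e2 3 1],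
!![e2 6 0, e2 0 0, e2 0 0; e2 0 0, e2 (-3) (-3), e2 0 0; e2 0 0, e2 0 0, e2 (-3) 3],
!![e2 0 0, e2 6 0, e2 0 0; e2 0 0, e2 0 0, e2 (-3) 3; e2 (-3) (-3), e2 0 0, e2 0 0],
!![e2 0 (-2), e2 0 (-2), e2 0 (-2); e2 3 1, e2 (-3) 1, e2 0 (-2); e2 (-3) 1, e2 3 1, e2 0 (-2)],
!![e2 0 0, e2 (-3) 3, e2 0 0; e2 0 0, e2 0 0, e2 (-3) (-3); e2 6 0, e2 0 0, e2 0 0],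
!![e2 0 0, e2 0 0, e2 6 0; e2 6 0, e2 0 0, e2 0 0; e2 0 0, e2 6 0, e2 0 0],
!![e2 0 (-2), e2 3 1, e2 (-3) 1; e2 0 (-2), e2 (-3) 1, e2 3 1; e2 0 (-2), e2 0 (-2), e2 0 (-2)],
!![e2 0 (-2), e2 0 (-2), e2 0 (-2); e2 (-3) 1, e2 0 (-2), e2 3 1; e2 3 1, e2 0 (-2), e2 (-3) 1],
!![e2 (-6) 0, e2 0 0, e2 0 0; e2 0 0, e2 0 0, e2 (-6) 0; e2 0 0, e2 (-6) 0, e2 0 0],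
!![e2 0 0, e2 6 0, e2 0 0; e2 0 0, e2 0 0, e2 (-3) (-3); e2 (-3) 3, e2 0 0, e2 0 0],
!![e2 0 0, e2 (-3) 3, e2 0 0; e2 0 0, e2 0 0, e2 6 0; e2 (-3) (-3), e2 0 0, e2 0 0],
!![e2 0 0, e2 0 0, e2 6 0; e2 (-3) 3, e2 0 0, e2 0 0; e2 0 0, e2 (-3) (-3), e2 0 0],
!![e2 0 (-2), e2 3 1, e2 (-3) 1; e2 3 1, e2 0 (-2), e2 (-3) 1; e2 (-3) 1, e2 (-3) 1, e2 (-3) 1],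
!![e2 (-6) 0, e2 0 0, e2 0 0; e2 0 0, e2 0 0, e2 3 (-3); e2 0 0, e2 3 3, e2 0 0],
!![e2 0 0, e2 (-3) (-3), e2 0 0; e2 0 0, e2 0 0, e2 (-3) 3; e2 6 0, e2 0 0, e2 0 0],
!![e2 0 0, e2 0 0, e2 (-3) 3; e2 (-3) (-3), e2 0 0, e2 0 0; e2 0 0, e2 6 0, e2 0 0],
!![e2 3 1, e2 (-3) 1, e2 0 (-2); e2 (-3) 1, e2 3 1, e2 0 (-2); e2 0 (-2), e2 0 (-2), e2 0 (-2)],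
!![e2 0 0, e2 0 0, e2 (-3) (-3); e2 6 0, e2 0 0, e2 0 0; e2 0 0, e2 (-3) 3, e2 0 0],
!![e2 0 (-2), e2 (-3) 1, e2 3 1; e2 0 (-2), e2 0 (-2), e2 0 (-2); e2 0 (-2), e2 3 1, e2 (-3) 1],
!![e2 (-3) 1, e2 0 (-2), e2 3 1; e2 3 1, e2 0 (-2), e2 (-3) 1; e2 0 (-2), e2 0 (-2), e2 0 (-2)],
!![e2 0 0, e2 0 0, e2 (-6) 0; e2 0 0, e2 (-6) 0, e2 0 0; e2 (-6) 0, e2 0 0, e2 0 0],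
!![e2 0 (-2), e2 3 1, e2 (-3) 1; e2 (-3) 1, e2 3 1, e2 0 (-2); e2 3 1, e2 3 1, e2 3 1],
!![e2 (-6) 0, e2 0 0, e2 0 0; e2 0 0, e2 0 0, e2 3 3; e2 0 0, e2 3 (-3), e2 0 0],
!![e2 0 0, e2 (-6) 0, e2 0 0; e2 (-6) 0, e2 0 0, e2 0 0; e2 0 0, e2 0 0, e2 (-6) 0],
!![e2 0 2, e2 0 2, e2 0 2; e2 0 2, e2 3 (-1), e2 (-3) (-1); e2 0 2, e2 (-3) (-1), e2 3 (-1)],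
!![e2 0 0, e2 (-3) 3, e2 0 0; e2 0 0, e2 0 0, e2 (-3) 3; e2 (-3) 3, e2 0 0, e2 0 0],
!![e2 0 0, e2 0 0, e2 6 0; e2 (-3) (-3), e2 0 0, e2 0 0; e2 0 0, e2 (-3) 3, e2 0 0],
!![e2 0 0, e2 (-3) (-3), e2 0 0; e2 0 0, e2 0 0, e2 (-3) (-3); e2 (-3) (-3), e2 0 0, e2 0 0],
!![e2 0 0, e2 0 0, e2 (-3) 3; e2 6 0, e2 0 0, e2 0 0; e2 0 0, e2 (-3) (-3), e2 0 0],
!![e2 3 1, e2 (-3) 1, e2 0 (-2); e2 0 (-2), e2 (-3) 1, e2 3 1; e2 (-3) 1, e2 (-3) 1, e2 (-3) 1],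
!![e2 0 0, e2 0 0, e2 (-3) (-3); e2 (-3) 3, e2 0 0, e2 0 0; e2 0 0, e2 6 0, e2 0 0],
!![e2 0 (-2), e2 (-3) 1, e2 3 1; e2 3 1, e2 3 1, e2 3 1; e2 (-3) 1, e2 0 (-2), e2 3 1],
!![e2 (-3) 1, e2 0 (-2), e2 3 1; e2 (-3) 1, e2 3 1, e2 0 (-2); e2 (-3) 1, e2 (-3) 1, e2 (-3) 1],
!![e2 0 0, e2 0 0, e2 (-6) 0; e2 0 0, e2 3 (-3), e2 0 0; e2 3 3, e2 0 0, e2 0 0],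
!![e2 0 0, e2 (-6) 0, e2 0 0; e2 3 (-3), e2 0 0, e2 0 0; e2 0 0, e2 0 0, e2 3 3],
!![e2 0 2, e2 0 2, e2 0 2; e2 (-3) (-1), e2 0 2, e2 3 (-1); e2 3 (-1), e2 0 2, e2 (-3) (-1)],
!![e2 (-3) 3, e2 0 0, e2 0 0; e2 0 0, e2 (-3) (-3), e2 0 0; e2 0 0, e2 0 0, e2 6 0],
!![e2 3 1, e2 0 (-2), e2 (-3) 1; e2 (-3) 1, e2 (-3) 1, e2 (-3) 1; e2 0 (-2), e2 3 1, e2 (-3) 1],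
!![e2 0 0, e2 0 0, e2 3 (-3); e2 0 0, e2 3 3, e2 0 0; e2 (-6) 0, e2 0 0, e2 0 0],
!![e2 (-3) (-3), e2 0 0, e2 0 0; e2 0 0, e2 6 0, e2 0 0; e2 0 0, e2 0 0, e2 (-3) 3],
!![e2 (-3) 1, e2 3 1, e2 0 (-2); e2 0 (-2), e2 0 (-2), e2 0 (-2); e2 3 1, e2 (-3) 1, e2 0 (-2)],
!![e2 3 1, e2 0 (-2), e2 (-3) 1; e2 0 (-2), e2 0 (-2), e2 0 (-2); e2 (-3) 1, e2 0 (-2), e2 3 1],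
!![e2 (-3) 1, e2 3 1, e2 0 (-2); e2 3 1, e2 3 1, e2 3 1; e2 0 (-2), e2 3 1, e2 (-3) 1],
!![e2 0 0, e2 0 0, e2 3 3; e2 0 0, e2 3 (-3), e2 0 0; e2 (-6) 0, e2 0 0, e2 0 0],
!![e2 0 2, e2 3 (-1), e2 (-3) (-1); e2 0 2, e2 (-3) (-1), e2 3 (-1); e2 0 2, e2 0 2, e2 0 2],
!![e2 0 (-2), e2 (-3) 1, e2 3 1; e2 (-3) 1, e2 (-3) 1, e2 (-3) 1; e2 3 1, e2 (-3) 1, e2 0 (-2)],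
!![e2 (-3) 1, e2 0 (-2), e2 3 1; e2 0 (-2), e2 (-3) 1, e2 3 1; e2 3 1, e2 3 1, e2 3 1],
!![e2 0 0, e2 0 0, e2 (-6) 0; e2 0 0, e2 3 3, e2 0 0; e2 3 (-3), e2 0 0, e2 0 0],
!![e2 0 0, e2 (-6) 0, e2 0 0; e2 3 3, e2 0 0, e2 0 0; e2 0 0, e2 0 0, e2 3 (-3)],
!![e2 0 2, e2 0 2, e2 0 2; e2 3 (-1), e2 (-3) (-1), e2 0 2; e2 (-3) (-1), e2 3 (-1), e2 0 2],
!![e2 0 0, e2 3 (-3), e2 0 0; e2 (-6) 0, e2 0 0, e2 0 0; e2 0 0, e2 0 0, e2 3 3],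
!![e2 0 2, e2 (-3) (-1), e2 3 (-1); e2 0 2, e2 0 2, e2 0 2; e2 0 2, e2 3 (-1), e2 (-3) (-1)],
!![e2 0 0, e2 (-3) (-3), e2 0 0; e2 0 0, e2 0 0, e2 6 0; e2 (-3) 3, e2 0 0, e2 0 0],
!![e2 0 0, e2 0 0, e2 (-3) 3; e2 (-3) 3, e2 0 0, e2 0 0; e2 0 0, e2 (-3) 3, e2 0 0],
!![e2 3 1, e2 (-3) 1, e2 0 (-2); e2 3 1, e2 0 (-2), e2 (-3) 1; e2 3 1, e2 3 1, e2 3 1],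
!![e2 0 0, e2 0 0, e2 (-3) (-3); e2 (-3) (-3), e2 0 0, e2 0 0; e2 0 0, e2 (-3) (-3), e2 0 0],
!![e2 (-3) 3, e2 0 0, e2 0 0; e2 0 0, e2 6 0, e2 0 0; e2 0 0, e2 0 0, e2 (-3) (-3)],
!![e2 0 0, e2 0 0, e2 3 (-3); e2 0 0, e2 (-6) 0, e2 0 0; e2 3 3, e2 0 0, e2 0 0],
!![e2 (-3) (-3), e2 0 0, e2 0 0; e2 0 0, e2 (-3) 3, e2 0 0; e2 0 0, e2 0 0, e2 6 0],
!![e2 3 1, e2 0 (-2), e2 (-3) 1; e2 3 1, e2 3 1, e2 3 1; e2 3 1, e2 (-3) 1, e2 0 (-2)],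
!![e2 (-3) 1, e2 3 1, e2 0 (-2); e2 (-3) 1, e2 (-3) 1, e2 (-3) 1; e2 (-3) 1, e2 0 (-2), e2 3 1],
!![e2 0 0, e2 0 0, e2 3 3; e2 0 0, e2 3 3, e2 0 0; e2 3 3, e2 0 0, e2 0 0],
!![e2 0 2, e2 3 (-1), e2 (-3) (-1); e2 (-3) (-1), e2 3 (-1), e2 0 2; e2 3 (-1), e2 3 (-1), e2 3 (-1)],
!![e2 0 0, e2 3 (-3), e2 0 0; e2 3 (-3), e2 0 0, e2 0 0; e2 0 0, e2 0 0, e2 3 (-3)],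
!![e2 0 2, e2 (-3) (-1), e2 3 (-1); e2 (-3) (-1), e2 (-3) (-1), e2 (-3) (-1); e2 3 (-1), e2 (-3) (-1), e2 0 2],
!![e2 3 1, e2 3 1, e2 3 1; e2 (-3) 1, e2 0 (-2), e2 3 1; e2 0 (-2), e2 (-3) 1, e2 3 1],
!![e2 0 0, e2 3 (-3), e2 0 0; e2 3 3, e2 0 0, e2 0 0; e2 0 0, e2 0 0, e2 (-6) 0],
!![e2 3 (-3), e2 0 0, e2 0 0; e2 0 0, e2 0 0, e2 3 3; e2 0 0, e2 (-6) 0, e2 0 0],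
!![e2 (-3) (-1), e2 0 2, e2 3 (-1); e2 3 (-1), e2 0 2, e2 (-3) (-1); e2 0 2, e2 0 2, e2 0 2],
!![e2 (-3) 1, e2 (-3) 1, e2 (-3) 1; e2 0 (-2), e2 3 1, e2 (-3) 1; e2 3 1, e2 0 (-2), e2 (-3) 1],
!![e2 0 0, e2 3 3, e2 0 0; e2 (-6) 0, e2 0 0, e2 0 0; e2 0 0, e2 0 0, e2 3 (-3)],
!![e2 3 1, e2 3 1, e2 3 1; e2 0 (-2), e2 3 1, e2 (-3) 1; e2 (-3) 1, e2 3 1, e2 0 (-2)],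
!![e2 (-3) 1, e2 (-3) 1, e2 (-3) 1; e2 3 1, e2 (-3) 1, e2 0 (-2); e2 0 (-2), e2 (-3) 1, e2 3 1],
!![e2 0 0, e2 3 3, e2 0 0; e2 3 (-3), e2 0 0, e2 0 0; e2 0 0, e2 0 0, e2 (-6) 0],
!![e2 3 3, e2 0 0, e2 0 0; e2 0 0, e2 0 0, e2 3 (-3); e2 0 0, e2 (-6) 0, e2 0 0],
!![e2 3 (-1), e2 (-3) (-1), e2 0 2; e2 (-3) (-1), e2 3 (-1), e2 0 2; e2 0 2, e2 0 2, e2 0 2],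
!![e2 0 0, e2 0 0, e2 3 3; e2 0 0, e2 (-6) 0, e2 0 0; e2 3 (-3), e2 0 0, e2 0 0],
!![e2 0 2, e2 3 (-1), e2 (-3) (-1); e2 3 (-1), e2 0 2, e2 (-3) (-1); e2 (-3) (-1), e2 (-3) (-1), e2 (-3) (-1)],
!![e2 0 2, e2 (-3) (-1), e2 3 (-1); e2 3 (-1), e2 3 (-1), e2 3 (-1); e2 (-3) (-1), e2 0 2, e2 3 (-1)],
!![e2 (-3) (-1), e2 3 (-1), e2 0 2; e2 0 2, e2 0 2, e2 0 2; e2 3 (-1), e2 (-3) (-1), e2 0 2],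
!![e2 3 (-1), e2 0 2, e2 (-3) (-1); e2 0 2, e2 0 2, e2 0 2; e2 (-3) (-1), e2 0 2, e2 3 (-1)],
!![e2 (-3) 3, e2 0 0, e2 0 0; e2 0 0, e2 (-3) 3, e2 0 0; e2 0 0, e2 0 0, e2 (-3) 3],
!![e2 0 0, e2 0 0, e2 3 (-3); e2 0 0, e2 3 (-3), e2 0 0; e2 3 (-3), e2 0 0, e2 0 0],
!![e2 (-3) (-3), e2 0 0, e2 0 0; e2 0 0, e2 (-3) (-3), e2 0 0; e2 0 0, e2 0 0, e2 (-3) (-3)],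
!![e2 3 (-3), e2 0 0, e2 0 0; e2 0 0, e2 0 0, e2 (-6) 0; e2 0 0, e2 3 3, e2 0 0],
!![e2 (-3) (-1), e2 0 2, e2 3 (-1); e2 0 2, e2 (-3) (-1), e2 3 (-1); e2 3 (-1), e2 3 (-1), e2 3 (-1)],
!![e2 3 1, e2 3 1, e2 3 1; e2 3 1, e2 (-3) 1, e2 0 (-2); e2 3 1, e2 0 (-2), e2 (-3) 1],
!![e2 (-3) 1, e2 (-3) 1, e2 (-3) 1; e2 (-3) 1, e2 0 (-2), e2 3 1; e2 (-3) 1, e2 3 1, e2 0 (-2)],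
!![e2 0 0, e2 3 3, e2 0 0; e2 3 3, e2 0 0, e2 0 0; e2 0 0, e2 0 0, e2 3 3],
!![e2 3 3, e2 0 0, e2 0 0; e2 0 0, e2 0 0, e2 3 3; e2 0 0, e2 3 3, e2 0 0],
!![e2 3 (-1), e2 (-3) (-1), e2 0 2; e2 3 (-1), e2 0 2, e2 (-3) (-1); e2 3 (-1), e2 3 (-1), e2 3 (-1)],
!![e2 (-3) (-1), e2 3 (-1), e2 0 2; e2 (-3) (-1), e2 (-3) (-1), e2 (-3) (-1); e2 (-3) (-1), e2 0 2, e2 3 (-1)],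
!![e2 3 (-1), e2 0 2, e2 (-3) (-1); e2 (-3) (-1), e2 (-3) (-1), e2 (-3) (-1); e2 0 2, e2 3 (-1), e2 (-3) (-1)],
!![e2 (-3) (-1), e2 3 (-1), e2 0 2; e2 3 (-1), e2 3 (-1), e2 3 (-1); e2 0 2, e2 3 (-1), e2 (-3) (-1)],
!![e2 3 (-3), e2 0 0, e2 0 0; e2 0 0, e2 0 0, e2 3 (-3); e2 0 0, e2 3 (-3), e2 0 0],
!![e2 (-3) (-1), e2 (-3) (-1), e2 (-3) (-1); e2 3 (-1), e2 (-3) (-1), e2 0 2; e2 0 2, e2 (-3) (-1), e2 3 (-1)],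
!![e2 3 3, e2 0 0, e2 0 0; e2 0 0, e2 0 0, e2 (-6) 0; e2 0 0, e2 3 (-3), e2 0 0],
!![e2 3 (-1), e2 3 (-1), e2 3 (-1); e2 (-3) (-1), e2 0 2, e2 3 (-1); e2 0 2, e2 (-3) (-1), e2 3 (-1)],
!![e2 3 (-1), e2 (-3) (-1), e2 0 2; e2 0 2, e2 (-3) (-1), e2 3 (-1); e2 (-3) (-1), e2 (-3) (-1), e2 (-3) (-1)],
!![e2 (-3) (-1), e2 0 2, e2 3 (-1); e2 (-3) (-1), e2 3 (-1), e2 0 2; e2 (-3) (-1), e2 (-3) (-1), e2 (-3) (-1)],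
!![e2 3 (-1), e2 0 2, e2 (-3) (-1); e2 3 (-1), e2 3 (-1), e2 3 (-1); e2 3 (-1), e2 (-3) (-1), e2 0 2],
!![e2 (-3) (-1), e2 (-3) (-1), e2 (-3) (-1); e2 0 2, e2 3 (-1), e2 (-3) (-1); e2 3 (-1), e2 0 2, e2 (-3) (-1)],
!![e2 3 (-1), e2 3 (-1), e2 3 (-1); e2 3 (-1), e2 (-3) (-1), e2 0 2; e2 3 (-1), e2 0 2, e2 (-3) (-1)],
!![e2 (-3) (-1), e2 (-3) (-1), e2 (-3) (-1); e2 (-3) (-1), e2 0 2, e2 3 (-1); e2 (-3) (-1), e2 3 (-1), e2 0 2],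
!![e2 3 (-1), e2 3 (-1), e2 3 (-1); e2 0 2, e2 3 (-1), e2 (-3) (-1); e2 (-3) (-1), e2 3 (-1), e2 0 2]
]
def idxT : List Nat := [1,2,3,4,5,6,7,8,9,9,10,11,0,12,10,13,14,15,15,3,16,17,18,19,20,0,21,21,22,23,24,6,25,25,26,27,28,29,24,30,31,32,33,1,34,34,35,36,11,37,38,2,33,22,29,39,40,40,9,41,31,42,43,3,44,26,45,19,46,46,11,47,48,49,50,16,51,52,53,23,54,54,38,0,55,56,57,58,4,48,5,58,35,8,59,44,44,15,60,56,61,45,6,62,37,63,32,64,64,16,65,66,36,67,67,52,1,59,7,68,68,63,69,23,70,71,61,55,72,72,21,73,74,43,53,75,34,76,41,77,78,27,71,2,10,40,51,43,57,79,79,25,80,69,50,81,81,27,4,73,60,82,47,83,8,12,20,49,14,84,62,62,24,85,18,86,63,84,13,74,36,87,88,86,17,75,89,45,66,90,48,91,60,92,93,38,88,5,76,85,94,65,95,14,19,89,70,91,41,96,97,69,98,98,78,7,49,90,99,26,79,83,32,68,87,22,72,77,37,46,95,99,76,100,100,47,17,85,99,101,52,102,12,80,103,29,88,54,31,101,82,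20,39,28,89,50,97,102,42,30,90,70,53,104,104,93,13,57,74,97,35,75,92,51,64,103,77,91,105,105,65,30,102,67,56,78,94,33,71,81,18,87,66,106,96,104,39,92,73,107,95,105,61,107,80,55,106,101,28,93,96,58,82,106,59,103,107,86,94,98,84,83,100,42]
def invT : List Nat := [4,8,27,0,14,38,17,0,47,21,6,0,1,29,52,30,1,65,34,10,1,2,39,71,31,2,54,3,19,2,48,3,4,16,23,3,55,4,80,5,59,88,56,5,67,6,32,5,25,36,6,7,61,78,58,7,96,68,22,7,8,55,83,9,43,8,75,9,17,41,26,9,10,57,12,11,50,10,73,11,21,47,52,11,12,84,102,18,12,81,13,86,93,20,13,82,74,35,13,14,17,95,15,45,14,90,15,30,60,37,15,76,16,34,65,27,16,84,18,98,19,48,18,46,69,19,86,20,107,49,44,20,32,21,31,22,62,33,23,76,22,54,78,23,24,63,29,72,24,55,85,51,24,91,25,48,80,38,25,26,87,44,27,82,26,28,42,101,33,28,94,89,49,28,29,30,103,39,31,104,64,53,32,42,33,100,57,34,56,35,40,58,36,91,35,67,93,36,37,97,62,38,94,37,40,74,39,51,70,40,87,41,68,96,47,41,43,75,42,53,99,4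3,44,89,59,45,90,61,66,77,45,92,46,75,95,71,46,50,73,49,81,101,50,52,96,51,104,83,53,107,54,73,59,56,106,79,66,57,61,58,105,97,60,74,82,65,60,62,68,84,63,72,86,69,92,63,99,64,90,103,88,64,106,95,66,100,67,76,98,103,69,70,85,89,71,106,70,77,79,72,78,107,77,83,102,79,94,80,85,105,81,91,88,98,87,93,100,92,102,104,97,101,105,99]
def parT : List Nat := [0,0,0,0,1,1,1,2,2,2,3,3,4,5,5,5,6,7,7,7,8,8,9,9,10,10,11,11,12,12,13,13,13,14,14,15,15,16,16,18,18,19,20,20,21,22,22,23,24,24,24,25,25,26,26,28,28,28,29,31,32,33,34,35,35,36,37,37,39,40,41,41,42,43,44,45,45,46,46,49,50,51,53,54,56,57,58,60,60,62,63,63,64,64,66,67,69,70,70,72,77,79,80,81,87,92,97,99]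
def genT : List Nat := [0,0,1,2,0,1,2,0,1,2,1,2,1,0,1,2,2,0,1,2,0,2,1,2,0,2,1,2,0,1,0,1,2,0,2,1,2,1,2,1,2,2,1,2,1,0,2,2,0,1,2,1,2,0,2,0,1,2,0,1,2,1,1,0,2,2,0,2,2,2,1,2,2,2,0,0,2,1,2,2,2,2,2,1,1,2,1,1,2,0,0,2,1,2,2,1,2,0,2,2,2,2,1,1,2,2,2,2]
/-! ### Scaled matrices and bridge lemmas -/

def Lg (n : ℕ) : Matrix (Fin 3) (Fin 3) E3 := Ldata.getD n 1

def c6M : Matrix (Fin 3) (Fin 3) E3 :=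
  !![e2 6 0, e2 0 0, e2 0 0; e2 0 0, e2 6 0, e2 0 0; e2 0 0, e2 0 0, e2 6 0]

theorem hlen : Ldata.length = 108 := by decide

theorem hid : Lg 0 = c6M := by decide

theorem hidx_s : idxT.getD (3*4+0) 0 = 0 := by decide
theorem hidx_t : idxT.getD (3*8+1) 0 = 0 := by decide
theorem hidx_v : idxT.getD (3*27+2) 0 = 0 := by decide

theorem hLg1 : Lg 1 = !![e2 6 0, e2 0 0, e2 0 0; e2 0 0, e2 (-3) 3, e2 0 0; e2 0 0, e2 0 0, e2 (-3) (-3)] := by decide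
theorem hLg2 : Lg 2 = !![e2 0 0, e2 6 0, e2 0 0; e2 0 0, e2 0 0, e2 6 0; e2 6 0, e2 0 0, e2 0 0] := by decide
theorem hLg3 : Lg 3 = !![e2 0 (-2), e2 0 (-2), e2 0 (-2); e2 0 (-2), e2 3 1, e2 (-3) 1; e2 0 (-2), e2 (-3) 1, e2 3 1] := by decide

noncomputable def Cmat (n : ℕ) : Matrix (Fin 3) (Fin 3) ℂ := (6:ℂ)⁻¹ • Φ (Lg n)

theorem inv_omega_diff : (ω - ω ^ 2)⁻¹ = -sq3 / 3 := by
  rw [show ω - ω ^ 2 = sq3 from rfl, sq3_inv]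

theorem PhiC6 : Φ c6M = (6:ℂ) • 1 := by
  ext i j
  fin_cases i <;> fin_cases j <;>
    simp [Φ_apply, phi_apply, c6M, Matrix.one_apply, Matrix.vecHead, Matrix.vecTail]

theorem PhiS : Φ (Lg 1) = (6:ℂ) • Smat := by
  rw [hLg1]
  ext i j
  fin_cases i <;> fin_cases j <;>
    simp [Φ_apply, phi_apply, Smat, Matrix.vecHead, Matrix.vecTail] <;>
    (try simp only [omega_sq_eq, omega_eq]) <;> (try push_cast) <;>
    first
      | ring1
      | linear_combination (3/2 : ℂ) * sq3_sq
      | linear_combination (-3/2 : ℂ) * sq3_sq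

theorem PhiT : Φ (Lg 2) = (6:ℂ) • Tmat := by
  rw [hLg2]
  ext i j
  fin_cases i <;> fin_cases j <;>
    simp [Φ_apply, phi_apply, Tmat, Matrix.vecHead, Matrix.vecTail]

theorem PhiV : Φ (Lg 3) = (6:ℂ) • Vmat := by
  rw [hLg3]
  ext i j
  fin_cases i <;> fin_cases j <;>
    simp [Φ_apply, phi_apply, Vmat, inv_omega_diff, Matrix.vecHead, Matrix.vecTail] <;>
    (try simp only [omega_sq_eq, omega_eq]) <;> (try push_cast) <;>
    first
      | ring1
      | linear_combination (1:ℂ) * sq3_sq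
      | linear_combination (-1:ℂ) * sq3_sq
      | linear_combination (1/3:ℂ) * sq3_sq
      | linear_combination (-1/3:ℂ) * sq3_sq
      | linear_combination (1/6:ℂ) * sq3_sq
      | linear_combination (-1/6:ℂ) * sq3_sq
      | linear_combination (sq3 / 2 - 1) * sq3_sq
      | linear_combination (1 - sq3 / 2) * sq3_sq
      | linear_combination (sq3 / 2 + 1) * sq3_sq
      | linear_combination (-sq3 / 2 - 1) * sq3_sq

theorem C0 : Cmat 0 = 1 := by
  rw [Cmat, hid, PhiC6, smul_smul]
  norm_num

theorem CS : Cmat 1 = Smat := by rw [Cmat, PhiS, smul_smul]; norm_num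
theorem CT : Cmat 2 = Tmat := by rw [Cmat, PhiT, smul_smul]; norm_num
theorem CV : Cmat 3 = Vmat := by rw [Cmat, PhiV, smul_smul]; norm_num

/-! ### The decidable core facts -/

section DecideFacts

set_option maxRecDepth 1000000 in
set_option maxHeartbeats 4000000 in
theorem hmul : ∀ k : Fin 108, ∀ g : Fin 3,
    idxT.getD (3*k.val+g.val) 0 < 108 ∧
    Lg k.val * Lg (g.val+1) = c6M * Lg (idxT.getD (3*k.val+g.val) 0) := by
  decide

set_option maxRecDepth 1000000 in
set_option maxHeartbeats 4000000 in
theorem htab : ∀ k : Fin 108, k.val ≠ 0 →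
    parT.getD k.val 0 < k.val ∧ genT.getD k.val 0 < 3 ∧
    idxT.getD (3*(parT.getD k.val 0)+(genT.getD k.val 0)) 0 = k.val := by
  decide

set_option maxRecDepth 1000000 in
set_option maxHeartbeats 4000000 in
theorem hinvtab : ∀ k : Fin 108, ∀ g : Fin 3,
    invT.getD (3*k.val+g.val) 0 < 108 ∧
    idxT.getD (3*(invT.getD (3*k.val+g.val) 0)+g.val) 0 = k.val := by
  decide

set_option maxRecDepth 1000000 in
set_option maxHeartbeats 4000000 in
theorem hnodup : Ldata.Nodup := by
  decide

set_option maxRecDepth 1000000 in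
set_option maxHeartbeats 4000000 in
theorem hdet : ∀ k : Fin 108, (Lg k.val).det = e2 216 0 := by
  simp only [Matrix.det_fin_three]
  decide

end DecideFacts

/-! ### Multiplication of the complex matrices -/

theorem Cmul (k g : ℕ) (hk : k < 108) (hg : g < 3) :
    Cmat k * Cmat (g+1) = Cmat (idxT.getD (3*k+g) 0) := by
  have h := (hmul ⟨k, hk⟩ ⟨g, hg⟩).2
  have h2 := congrArg Φ h
  rw [_root_.map_mul, _root_.map_mul, PhiC6, Matrix.smul_mul, one_mul] at h2
  simp only [Fin.val_mk] at h2
  rw [Cmat, Cmat, Cmat, Matrix.smul_mul, Matrix.mul_smul, h2, smul_smul, smul_smul]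
  norm_num

theorem CmulS : Cmat 4 * Smat = 1 := by
  have := Cmul 4 0 (by norm_num) (by norm_num)
  rwa [show idxT.getD (3*4+0) 0 = 0 from hidx_s, C0, CS] at this

theorem CmulT : Cmat 8 * Tmat = 1 := by
  have := Cmul 8 1 (by norm_num) (by norm_num)
  rwa [show idxT.getD (3*8+1) 0 = 0 from hidx_t, C0, CT] at this

theorem CmulV : Cmat 27 * Vmat = 1 := by
  have := Cmul 27 2 (by norm_num) (by norm_num)
  rwa [show idxT.getD (3*27+2) 0 = 0 from hidx_v, C0, CV] at this

/-! ### The generators as elements of `GL` -/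

noncomputable def gS : GL (Fin 3) ℂ :=
  ⟨Smat, Cmat 4, mul_eq_one_comm.mpr CmulS, CmulS⟩

noncomputable def gT : GL (Fin 3) ℂ :=
  ⟨Tmat, Cmat 8, mul_eq_one_comm.mpr CmulT, CmulT⟩

noncomputable def gV : GL (Fin 3) ℂ :=
  ⟨Vmat, Cmat 27, mul_eq_one_comm.mpr CmulV, CmulV⟩

theorem gS_mem : gS ∈ {g : GL (Fin 3) ℂ |
    (g : Matrix (Fin 3) (Fin 3) ℂ) = Smat ∨ (g : Matrix (Fin 3) (Fin 3) ℂ) = Tmat ∨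
      (g : Matrix (Fin 3) (Fin 3) ℂ) = Vmat} := Or.inl rfl

theorem gT_mem : gT ∈ {g : GL (Fin 3) ℂ |
    (g : Matrix (Fin 3) (Fin 3) ℂ) = Smat ∨ (g : Matrix (Fin 3) (Fin 3) ℂ) = Tmat ∨
      (g : Matrix (Fin 3) (Fin 3) ℂ) = Vmat} := Or.inr (Or.inl rfl)

theorem gV_mem : gV ∈ {g : GL (Fin 3) ℂ |
    (g : Matrix (Fin 3) (Fin 3) ℂ) = Smat ∨ (g : Matrix (Fin 3) (Fin 3) ℂ) = Tmat ∨
      (g : Matrix (Fin 3) (Fin 3) ℂ) = Vmat} := Or.inr (Or.inr rfl)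

theorem gen_val : ∀ g : ℕ, g < 3 →
    ∃ y : GL (Fin 3) ℂ, y ∈ G108 ∧ (y : Matrix (Fin 3) (Fin 3) ℂ) = Cmat (g+1) := by
  intro g hg
  interval_cases g
  · exact ⟨gS, Subgroup.subset_closure gS_mem, by rw [CS]; rfl⟩
  · exact ⟨gT, Subgroup.subset_closure gT_mem, by rw [CT]; rfl⟩
  · exact ⟨gV, Subgroup.subset_closure gV_mem, by rw [CV]; rfl⟩

theorem mem_val : ∀ y : GL (Fin 3) ℂ, y ∈ {g : GL (Fin 3) ℂ |
    (g : Matrix (Fin 3) (Fin 3) ℂ) = Smat ∨ (g : Matrix (Fin 3) (Fin 3) ℂ) = Tmat ∨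
      (g : Matrix (Fin 3) (Fin 3) ℂ) = Vmat} →
    ∃ g : ℕ, g < 3 ∧ (y : Matrix (Fin 3) (Fin 3) ℂ) = Cmat (g+1) := by
  rintro y (h | h | h)
  · exact ⟨0, by norm_num, by rw [h, CS]⟩
  · exact ⟨1, by norm_num, by rw [h, CT]⟩
  · exact ⟨2, by norm_num, by rw [h, CV]⟩

/-! ### `G108` is contained in the 108-element set -/

theorem forward : ∀ x ∈ G108, ∃ k : ℕ, k < 108 ∧
    (x : Matrix (Fin 3) (Fin 3) ℂ) = Cmat k := by
  intro x hx
  refine Subgroup.closure_induction_right ?_ ?_ ?_ hx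
  · exact ⟨0, by norm_num, by rw [C0]; rfl⟩
  · rintro a _ y hy ⟨k, hk, hak⟩
    obtain ⟨g, hg, hyg⟩ := mem_val y hy
    refine ⟨idxT.getD (3*k+g) 0, (hmul ⟨k, hk⟩ ⟨g, hg⟩).1, ?_⟩
    rw [Units.val_mul, hak, hyg, Cmul k g hk hg]
  · rintro a _ y hy ⟨k, hk, hak⟩
    obtain ⟨g, hg, hyg⟩ := mem_val y hy
    obtain ⟨hj, hjk⟩ := hinvtab ⟨k, hk⟩ ⟨g, hg⟩
    refine ⟨invT.getD (3*k+g) 0, hj, ?_⟩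
    have hC : Cmat (invT.getD (3*k+g) 0) * Cmat (g+1) = Cmat k := by
      rw [Cmul _ g hj hg, hjk]
    rw [Units.val_mul, hak, ← hC, ← hyg]
    calc Cmat (invT.getD (3*k+g) 0) * (y : Matrix (Fin 3) (Fin 3) ℂ) * ↑(y⁻¹)
        = Cmat (invT.getD (3*k+g) 0) * ((y : Matrix (Fin 3) (Fin 3) ℂ) * ↑(y⁻¹)) := by
          rw [mul_assoc]
      _ = Cmat (invT.getD (3*k+g) 0) := by rw [Units.mul_inv]; rw [mul_one]

/-! ### Every element of the set is in `G108` -/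

theorem backward : ∀ n : ℕ, n < 108 →
    ∃ x : GL (Fin 3) ℂ, x ∈ G108 ∧ (x : Matrix (Fin 3) (Fin 3) ℂ) = Cmat n := by
  intro n
  induction n using Nat.strong_induction_on with
  | _ n ih =>
    intro hn
    rcases Nat.eq_zero_or_pos n with h0 | hpos
    · subst h0
      exact ⟨1, one_mem _, by rw [C0]; rfl⟩
    · obtain ⟨hpar, hgen, hidx⟩ := htab ⟨n, hn⟩ (Nat.pos_iff_ne_zero.mp hpos)
      obtain ⟨xp, hxp, hxpv⟩ := ih _ hpar (lt_trans hpar hn)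
      obtain ⟨y, hy, hyv⟩ := gen_val _ hgen
      refine ⟨xp * y, mul_mem hxp hy, ?_⟩
      rw [Units.val_mul, hxpv, hyv, Cmul _ _ (lt_trans hpar hn) hgen, hidx]

/-! ### Distinctness -/

theorem Cmat_inj : ∀ i j : ℕ, i < 108 → j < 108 → Cmat i = Cmat j → i = j := by
  intro i j hi hj h
  have h6 : (6:ℂ)⁻¹ ≠ 0 := by norm_num
  have hΦ : Φ (Lg i) = Φ (Lg j) := by
    have := congrArg (fun M => (6:ℂ) • M) h
    simpa [Cmat, smul_smul] using this
  have hL : Lg i = Lg j := Φ_inj hΦ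
  have hi' : i < Ldata.length := by rw [hlen]; exact hi
  have hj' : j < Ldata.length := by rw [hlen]; exact hj
  rw [Lg, Lg, List.getD_eq_getElem _ _ hi', List.getD_eq_getElem _ _ hj'] at hL
  exact (hnodup.getElem_inj_iff).mp hL

/-! ### Main theorem -/

/-- `G₁₀₈ ⊆ SL₃(ℂ)` and `G₁₀₈` is a finite group of order `108`. -/
theorem G108_det_eq_one_and_card :
    (∀ g ∈ G108, (g : Matrix (Fin 3) (Fin 3) ℂ).det = 1) ∧ Nat.card G108 = 108 := by
  constructor
  · intro g hg
    obtain ⟨k, hk, hkv⟩ := forward g hg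
    rw [hkv, Cmat, Matrix.det_smul]
    have : (Φ (Lg k)).det = phi ((Lg k).det) := (RingHom.map_det phi (Lg k)).symm
    rw [this, hdet ⟨k, hk⟩, phi_apply]
    simp
    norm_num
  · have hback : ∀ k : Fin 108, ∃ x : GL (Fin 3) ℂ,
        x ∈ G108 ∧ (x : Matrix (Fin 3) (Fin 3) ℂ) = Cmat k.val :=
      fun k => backward k.val k.isLt
    let f : Fin 108 → G108 := fun k => ⟨(hback k).choose, (hback k).choose_spec.1⟩
    have hval : ∀ k : Fin 108, ((f k : GL (Fin 3) ℂ) : Matrix (Fin 3) (Fin 3) ℂ) = Cmat k.val :=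
      fun k => (hback k).choose_spec.2
    have hinj : Function.Injective f := by
      intro i j h
      have : Cmat i.val = Cmat j.val := by
        rw [← hval i, ← hval j, h]
      exact Fin.ext (Cmat_inj _ _ i.isLt j.isLt this)
    have hsurj : Function.Surjective f := by
      rintro ⟨x, hx⟩
      obtain ⟨k, hk, hkv⟩ := forward x hx
      refine ⟨⟨k, hk⟩, ?_⟩
      apply Subtype.ext
      apply Units.ext
      rw [hval ⟨k, hk⟩, ← hkv]
    exact Nat.card_eq_of_equiv_fin (Equiv.ofBijective f ⟨hinj, hsurj⟩).symm
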